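/- arXiv:1805.02879 — 2 statements merged into one kernel-verified Lean document; each statement's English description precedes it below -/
import Mathlib

section
/- Let A = ⟨Q, Σ⟩ be a DFA such that the graph Γ₂(A) is strongly connected. Then A is completely reachable; more precisely, for every non-empty subset P ⊆ Q there is a word w that is a product of words of defect at most 2 (possibly the empty product) such that P = Q·w. -/
/-!
Framework: complete deterministic finite automata, reachability of subsets,
defect/excluded/duplicate states of words, and the layered graphs
`Γ₁(A), Γ₂(A), …` of Bondar & Volkov, "A Characterization of Completely
Reachable Automata".
-/

/-- The action of a word on a state: `q · w`. -/
def actWord {Q σ : Type*} (δ : Q → σ → Q) (w : List σ) (q : Q) : Q :=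
  w.foldl δ q

/-- The image of a set of states under a word: `P · w`. -/
def actSet {Q σ : Type*} (δ : Q → σ → Q) (w : List σ) (P : Set Q) : Set Q :=
  actWord δ w '' P

/-- The set `excl(w) = Q \ Q·w` of excluded states of the word `w`. -/
def excl {Q σ : Type*} (δ : Q → σ → Q) (w : List σ) : Set Q :=
  Set.univ \ actSet δ w Set.univ

/-- The defect of the word `w`, i.e. `|Q \ Q·w|`. -/
noncomputable def defect {Q σ : Type*} (δ : Q → σ → Q) (w : List σ) : ℕ :=
  (excl δ w).ncard

/-- The set `dupl(w)` of duplicate states of the word `w`. -/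
def dupl {Q σ : Type*} (δ : Q → σ → Q) (w : List σ) : Set Q :=
  {p | ∃ q₁ q₂ : Q, q₁ ≠ q₂ ∧ actWord δ w q₁ = p ∧ actWord δ w q₂ = p}

/-- A subset `P ⊆ Q` is reachable if `P = Q·w` for some word `w`. -/
def reachableSubset {Q σ : Type*} (δ : Q → σ → Q) (P : Set Q) : Prop :=
  ∃ w : List σ, actSet δ w Set.univ = P

/-- A DFA is completely reachable if every nonempty subset of states is reachable. -/
def completelyReachable {Q σ : Type*} (δ : Q → σ → Q) : Prop :=
  ∀ P : Set Q, P.Nonempty → reachableSubset δ P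

/-- A directed graph given by a vertex set and an edge relation. -/
structure DGraph (V : Type*) where
  verts : Set V
  edge : V → V → Prop

/-- Reachability by a directed path in a graph. -/
def GReach {V : Type*} (G : DGraph V) : V → V → Prop :=
  Relation.ReflTransGen G.edge

/-- A graph is strongly connected if each of its vertices is reachable from
any other one. -/
def StronglyConnected {V : Type*} (G : DGraph V) : Prop :=
  ∀ u ∈ G.verts, ∀ v ∈ G.verts, GReach G u v

/-- The strongly connected component of the vertex `v`: all vertices mutually
reachable with `v`. -/
def scc {V : Type*} (G : DGraph V) (v : V) : Set V :=
  {u | u ∈ G.verts ∧ GReach G u v ∧ GReach G v u}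

/-- Vertices of the layered graphs: states (`Sum.inl`) and subsets of states
(`Sum.inr`). -/
abbrev Vtx (Q : Type*) := Q ⊕ Set Q

/-- The support of a set of vertices: the states belonging to it. -/
def support {Q : Type*} (S : Set (Vtx Q)) : Set Q :=
  {q | Sum.inl q ∈ S}

/-- The graph `Γ₁(A)`: vertices are the states, and there is an edge
`(excl w, dupl w)` for each word `w` of defect 1. -/
def Gamma1 {Q σ : Type*} (δ : Q → σ → Q) : DGraph (Vtx Q) where
  verts := Set.range Sum.inl
  edge := fun u v => ∃ q p : Q, u = Sum.inl q ∧ v = Sum.inl p ∧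
    ∃ w : List σ, defect δ w = 1 ∧ excl δ w = {q} ∧ p ∈ dupl δ w

/-- `Qnext G k`: the collection of the supports of all SCCs of `G` of rank
at least `k` (this is the set `Q_k` when `G = Γ_{k-1}(A)`). -/
def Qnext {Q : Type*} (G : DGraph (Vtx Q)) (k : ℕ) : Set (Set Q) :=
  {C | ∃ v ∈ G.verts, C = support (scc G v) ∧ k ≤ C.ncard}

/-- One step of the iterative construction: from `G = Γ_{k-1}(A)` build
`Γ_k(A)` by adding the new vertices `Q_k`, the inclusion edges `I_k`, and the
edges `E_k` enforced by words of defect `k`. -/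
def step {Q σ : Type*} (δ : Q → σ → Q) (G : DGraph (Vtx Q)) (k : ℕ) :
    DGraph (Vtx Q) where
  verts := G.verts ∪ Sum.inr '' Qnext G k
  edge := fun u v =>
    G.edge u v ∨
    (∃ C ∈ Qnext G k, v = Sum.inr C ∧
      ((∃ q : Q, u = Sum.inl q ∧ q ∈ C) ∨
       (∃ D : Set Q, u = Sum.inr D ∧ Sum.inr D ∈ G.verts ∧ D ⊂ C))) ∨
    (∃ C ∈ Qnext G k, ∃ p : Q, u = Sum.inr C ∧ v = Sum.inl p ∧
      ∃ w : List σ, defect δ w = k ∧ excl δ w ⊆ C ∧ p ∈ dupl δ w)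

/-- The layered graphs `Γ_k(A)` (with `Γ_0 := Γ_1`). -/
def Gamma {Q σ : Type*} (δ : Q → σ → Q) : ℕ → DGraph (Vtx Q)
  | 0 => Gamma1 δ
  | 1 => Gamma1 δ
  | (k + 2) => step δ (Gamma δ (k + 1)) (k + 2)

/-- The FAILURE condition at step `k`: every SCC of `Γ_k(A)` has rank at
most `k`. -/
def failsAt {Q σ : Type*} (δ : Q → σ → Q) (k : ℕ) : Prop :=
  ∀ v ∈ (Gamma δ k).verts, (support (scc (Gamma δ k) v)).ncard ≤ k

/-- The iterative construction stops at step `k` (so `Γ(A) = Γ_k(A)`):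
`k` is the first index at which `Γ_k(A)` is strongly connected (SUCCESS) or
every SCC of `Γ_k(A)` has rank at most `k` (FAILURE). -/
def stopsAt {Q σ : Type*} (δ : Q → σ → Q) (k : ℕ) : Prop :=
  1 ≤ k ∧ (StronglyConnected (Gamma δ k) ∨ failsAt δ k) ∧
    ∀ j, 1 ≤ j → j < k → ¬ StronglyConnected (Gamma δ j) ∧ ¬ failsAt δ j

/-!
If `P ⊊ Q` is nonempty and the word `w` excludes only states outside `P` and duplicates some
state of `P` (`Expands δ w P`), then `P = P'·w` for the strictly larger set `P' = w⁻¹P`;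
iterating from `P` up to `Q` writes `P = Q·w₁⋯wₙ`. Such a word of defect at most 2 exists
whenever `Γ₂(A)` is strongly connected: a path in `Γ₂(A)` from a state outside `P` to a state
in `P` has an edge leaving the vertices `avoiding P` (states not in `P`, subsets disjoint from
`P`). It is an edge of `Γ₁(A)`, an `E₂`-edge, or an `I₂`-edge into a strongly connected
component of `Γ₁(A)` meeting `P`, and a path inside that component yields a `Γ₁(A)`-edge of
the first kind.
-/

open Set

theorem Relation.ReflTransGen.exists_rel_of_mem_of_notMem {α : Type*} {r : α → α → Prop}
    {S : Set α} {a b : α} (h : Relation.ReflTransGen r a b) (ha : a ∈ S) (hb : b ∉ S) :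
    ∃ x ∈ S, ∃ y ∉ S, r x y := by
  by_contra! hclosed
  induction h with
  | refl => exact hb ha
  | tail _ hcd ih => exact ih fun hc => hclosed _ hc _ hb hcd

theorem Set.ncard_lt_ncard_preimage {α β : Type*} [Finite α] {f : α → β} {P : Set β}
    (hP : P ⊆ range f) {x y : α} (hxy : x ≠ y) (hfxy : f x = f y) (hy : f y ∈ P) :
    P.ncard < (f ⁻¹' P).ncard := by
  have hsub : P ⊆ f '' (f ⁻¹' P \ {x}) := by
    intro p hp
    obtain ⟨z, rfl⟩ := hP hp
    by_cases hzx : z = x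
    · subst hzx
      exact ⟨y, ⟨hy, hxy.symm⟩, hfxy.symm⟩
    · exact ⟨z, ⟨hp, hzx⟩, rfl⟩
  calc P.ncard ≤ (f '' (f ⁻¹' P \ {x})).ncard := ncard_le_ncard hsub ((toFinite _).image f)
    _ ≤ (f ⁻¹' P \ {x}).ncard := ncard_image_le (toFinite _)
    _ < (f ⁻¹' P).ncard := ncard_sdiff_singleton_lt_of_mem (mem_preimage.2 (hfxy ▸ hy))

section Automaton

variable {Q σ : Type*} (δ : Q → σ → Q)

theorem actWord_append (u v : List σ) (q : Q) :
    actWord δ (u ++ v) q = actWord δ v (actWord δ u q) :=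
  List.foldl_append ..

theorem actSet_append (u v : List σ) (P : Set Q) :
    actSet δ (u ++ v) P = actSet δ v (actSet δ u P) := by
  simp only [actSet, ← image_comp]
  exact image_congr fun q _ => actWord_append δ u v q

@[simp]
theorem actSet_nil (P : Set Q) : actSet δ [] P = P :=
  image_id P

theorem subset_range_actWord_of_excl_subset {w : List σ} {P : Set Q} (h : excl δ w ⊆ Pᶜ) :
    P ⊆ range (actWord δ w) := by
  intro p hp
  by_contra hr
  exact h ⟨mem_univ p, by simpa [actSet] using hr⟩ hp

def Expands (w : List σ) (P : Set Q) : Prop :=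
  excl δ w ⊆ Pᶜ ∧ (dupl δ w ∩ P).Nonempty

variable {δ}

theorem Expands.actSet_preimage {w : List σ} {P : Set Q} (hw : Expands δ w P) :
    actSet δ w (actWord δ w ⁻¹' P) = P :=
  image_preimage_eq_of_subset (subset_range_actWord_of_excl_subset δ hw.1)

theorem Expands.ncard_lt_ncard_preimage [Finite Q] {w : List σ} {P : Set Q}
    (hw : Expands δ w P) : P.ncard < (actWord δ w ⁻¹' P).ncard := by
  obtain ⟨_, ⟨x, y, hxy, hx, rfl⟩, hy⟩ := hw.2
  exact Set.ncard_lt_ncard_preimage (subset_range_actWord_of_excl_subset δ hw.1) hxy hx hy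

end Automaton

theorem GReach.inl_of_mem_support_scc {Q : Type*} {G : DGraph (Vtx Q)} {v : Vtx Q} {q r : Q}
    (hq : q ∈ support (scc G v)) (hr : r ∈ support (scc G v)) :
    GReach G (Sum.inl q) (Sum.inl r) :=
  Relation.ReflTransGen.trans hq.2.1 hr.2.2

section Gamma

variable {Q σ : Type*} {δ : Q → σ → Q}

def avoiding (P : Set Q) : Set (Vtx Q) :=
  {v | v.elim (· ∉ P) (Disjoint · P)}

theorem exists_expands_of_gamma1_reach {P : Set Q} {q p : Q}
    (hreach : GReach (Gamma1 δ) (Sum.inl q) (Sum.inl p)) (hq : q ∉ P) (hp : p ∈ P) :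
    ∃ w : List σ, defect δ w = 1 ∧ Expands δ w P := by
  obtain ⟨_, ha, _, hb, q₀, p₀, rfl, rfl, w, hw1, hwx, hwd⟩ :=
    hreach.exists_rel_of_mem_of_notMem (S := Sum.inl '' Pᶜ)
      (mem_image_of_mem _ hq) (by simpa [Sum.inl_injective.mem_set_image] using hp)
  rw [Sum.inl_injective.mem_set_image] at ha hb
  exact ⟨w, hw1, hwx ▸ singleton_subset_iff.2 ha, p₀, hwd, not_not.1 hb⟩

theorem exists_expands_of_gamma2_edge {P : Set Q} {a b : Vtx Q} (hab : (Gamma δ 2).edge a b)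
    (ha : a ∈ avoiding P) (hb : b ∉ avoiding P) :
    ∃ w : List σ, defect δ w ≤ 2 ∧ Expands δ w P := by
  rcases hab with hΓ₁ | ⟨C, hC, rfl, ⟨q, rfl, hqC⟩ | ⟨D, rfl, ⟨_, hD⟩, -⟩⟩ |
      ⟨C, -, p, rfl, rfl, w, hw2, hwC, hwp⟩
  · obtain ⟨q, p, rfl, rfl, -⟩ := id hΓ₁
    obtain ⟨w, hw1, hw⟩ := exists_expands_of_gamma1_reach (.single hΓ₁) ha (not_not.1 hb)
    exact ⟨w, hw1.le.trans one_le_two, hw⟩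
  · obtain ⟨v, -, rfl, -⟩ := hC
    obtain ⟨r, hrC, hrP⟩ := not_disjoint_iff.1 hb
    obtain ⟨w, hw1, hw⟩ :=
      exists_expands_of_gamma1_reach (GReach.inl_of_mem_support_scc hqC hrC) ha hrP
    exact ⟨w, hw1.le.trans one_le_two, hw⟩
  · exact absurd hD Sum.inl_ne_inr
  · exact ⟨w, hw2.le, hwC.trans (Disjoint.subset_compl_right ha), p, hwp, not_not.1 hb⟩

theorem exists_expands_of_stronglyConnected_gamma2 (h : StronglyConnected (Gamma δ 2))
    {P : Set Q} (hne : P.Nonempty) (hP : P ≠ univ) :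
    ∃ w : List σ, defect δ w ≤ 2 ∧ Expands δ w P := by
  obtain ⟨q, hq⟩ := ne_univ_iff_exists_notMem P |>.1 hP
  obtain ⟨p, hp⟩ := hne
  have hreach := h (Sum.inl q) (Or.inl ⟨q, rfl⟩) (Sum.inl p) (Or.inl ⟨p, rfl⟩)
  obtain ⟨a, ha, b, hb, hab⟩ :=
    hreach.exists_rel_of_mem_of_notMem (S := avoiding P) hq (not_not.2 hp)
  exact exists_expands_of_gamma2_edge hab ha hb

theorem exists_defect_le_two_factorization [Finite Q] (h : StronglyConnected (Gamma δ 2))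
    (P : Set Q) (hne : P.Nonempty) :
    ∃ ws : List (List σ), (∀ u ∈ ws, defect δ u ≤ 2) ∧
      actSet δ ws.flatten univ = P := by
  by_cases hP : P = univ
  · exact ⟨[], by simp, by simp [hP]⟩
  obtain ⟨w, hw2, hw⟩ := exists_expands_of_stronglyConnected_gamma2 h hne hP
  have hlt := hw.ncard_lt_ncard_preimage
  have hsum := ncard_add_ncard_compl P
  have hsum' := ncard_add_ncard_compl (actWord δ w ⁻¹' P)
  obtain ⟨ws, hws, hact⟩ := exists_defect_le_two_factorization h (actWord δ w ⁻¹' P)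
    (nonempty_of_ncard_ne_zero (by omega))
  refine ⟨ws ++ [w], by simpa [or_imp, forall_and] using ⟨hws, hw2⟩, ?_⟩
  rw [List.flatten_append, actSet_append, hact, List.flatten_singleton, hw.actSet_preimage]
termination_by Pᶜ.ncard
decreasing_by omega

end Gamma

/-- Theorem 2: if `Γ₂(A)` is strongly connected, then `A` is
completely reachable; more precisely, every non-empty subset `P ⊆ Q` satisfies
`P = Q·w` for some product `w` of words of defect at most 2. -/
theorem gamma2_strongly_connected_completely_reachable
    {Q σ : Type*} [Fintype Q] (δ : Q → σ → Q)
    (h : StronglyConnected (Gamma δ 2)) :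
    completelyReachable δ ∧
      ∀ P : Set Q, P.Nonempty →
        ∃ ws : List (List σ), (∀ u ∈ ws, defect δ u ≤ 2) ∧
          actSet δ ws.flatten Set.univ = P := by
  have hfact := exists_defect_le_two_factorization h
  refine ⟨fun P hP => ?_, hfact⟩
  obtain ⟨ws, -, hws⟩ := hfact P hP
  exact ⟨ws.flatten, hws⟩
end

section
/- For every n ≥ 3 and every k with 2 ≤ k < n, there exists a completely reachable DFA B with n states such that Γ(B) = Γ_k(B) is strongly connected while Γ_j(B) is not strongly connected for all j < k; that is, the iterative construction of Γ(B) terminates with SUCCESS after exactly k steps. (The family E_{n,k} witnesses this.) -/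
/-!
The witness automaton has as letters all transformations `f` of the states that either send
no state other than a fixed state `z` to `z`, or have defect at least `k`. Such transformations
are closed under composition, so a word of defect `< k` never duplicates `z`: no edge of `Γ_j`
enters `z` for `j < k`, and `Γ_j` is not strongly connected. The letters merging one state into
another state `p ≠ z` make all states other than `z` a single strongly connected component of
rank `n - 1 > j`, so the construction does not fail before step `k`. At step `k`, a letter
collapsing `k` states other than `z` onto `z` adds the edge `{z}ᶜ → z`, which closes every cycle
through `z`.
-/

open Set

namespace DGraph

variable {V : Type*} {G : DGraph V} {u v : V}

theorem eq_of_reach_of_forall_not_edge (h : ∀ w, ¬ G.edge w v) (huv : GReach G u v) :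
    u = v := by
  rcases Relation.ReflTransGen.cases_tail huv with rfl | ⟨w, -, hw⟩
  · rfl
  · exact absurd hw (h w)

theorem scc_eq_of_mem (hu : u ∈ scc G v) : scc G u = scc G v := by
  obtain ⟨-, huv, hvu⟩ := hu
  ext w
  constructor
  · rintro ⟨hw, hwu, huw⟩
    exact ⟨hw, Relation.ReflTransGen.trans hwu huv, Relation.ReflTransGen.trans hvu huw⟩
  · rintro ⟨hw, hwv, hvw⟩
    exact ⟨hw, Relation.ReflTransGen.trans hwv hvu, Relation.ReflTransGen.trans huv hvw⟩

theorem stronglyConnected_of_hub (c : V)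
    (h : ∀ v ∈ G.verts, GReach G v c ∧ GReach G c v) : StronglyConnected G :=
  fun u hu v hv => Relation.ReflTransGen.trans (h u hu).1 (h v hv).2

end DGraph

section LayeredGraphs

variable {Q σ : Type*}

theorem actSet_univ (δ : Q → σ → Q) (w : List σ) :
    actSet δ w univ = range (actWord δ w) :=
  image_univ

theorem excl_eq_compl_range (δ : Q → σ → Q) (w : List σ) :
    excl δ w = (range (actWord δ w))ᶜ := by
  rw [excl, actSet_univ, compl_eq_univ_sdiff]

/-- The shape of `Γ_j` for `j < k` in the witness automaton. -/
structure CliqueWithSource (z : Q) (G : DGraph (Vtx Q)) : Prop where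
  inl_mem : ∀ q, Sum.inl q ∈ G.verts
  eq_compl_of_inr_mem : ∀ C, Sum.inr C ∈ G.verts → C = {z}ᶜ
  not_edge_source : ∀ u, ¬ G.edge u (Sum.inl z)
  edge : ∀ q p, p ≠ z → p ≠ q → G.edge (Sum.inl q) (Sum.inl p)

namespace CliqueWithSource

variable {z p : Q} {G : DGraph (Vtx Q)} {δ : Q → σ → Q} {j : ℕ}

theorem reach (hG : CliqueWithSource z G) (hp : p ≠ z) (q : Q) :
    GReach G (Sum.inl q) (Sum.inl p) := by
  rcases eq_or_ne p q with rfl | hpq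
  · exact .refl
  · exact .single (hG.edge q p hp hpq)

theorem eq_of_reach_source (hG : CliqueWithSource z G) {u : Vtx Q}
    (h : GReach G u (Sum.inl z)) : u = Sum.inl z :=
  DGraph.eq_of_reach_of_forall_not_edge hG.not_edge_source h

theorem support_scc (hG : CliqueWithSource z G) (hp : p ≠ z) :
    support (scc G (Sum.inl p)) = {z}ᶜ := by
  ext y
  constructor
  · rintro ⟨-, -, hpy⟩ (rfl : y = z)
    exact hp (Sum.inl_injective (hG.eq_of_reach_source hpy))
  · intro hy
    exact ⟨hG.inl_mem y, hG.reach hp y, hG.reach hy p⟩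

theorem not_stronglyConnected (hG : CliqueWithSource z G) (hp : p ≠ z) :
    ¬ StronglyConnected G := fun h =>
  hp (Sum.inl_injective (hG.eq_of_reach_source (h _ (hG.inl_mem p) _ (hG.inl_mem z))))

theorem Qnext_eq [Finite Q] (hG : CliqueWithSource z G) (h2 : 2 ≤ j)
    (hj : j ≤ ({z}ᶜ : Set Q).ncard) : Qnext G j = {{z}ᶜ} := by
  ext C
  constructor
  · rintro ⟨v, -, rfl, hC⟩
    -- Of two distinct states in the component one is not `z`; its component is `{z}ᶜ`.
    obtain ⟨a, ha, b, hb, hab⟩ :=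
      (one_lt_ncard (toFinite _)).1 (by omega : 1 < (support (scc G v)).ncard)
    obtain ⟨x, hx, hxz⟩ : ∃ x ∈ support (scc G v), x ≠ z := by
      rcases eq_or_ne a z with rfl | haz
      · exact ⟨b, hb, hab.symm⟩
      · exact ⟨a, ha, haz⟩
    rw [← DGraph.scc_eq_of_mem hx, hG.support_scc hxz]
    rfl
  · rintro rfl
    obtain ⟨p, hp⟩ := nonempty_of_ncard_ne_zero (by omega : ({z}ᶜ : Set Q).ncard ≠ 0)
    exact ⟨Sum.inl p, hG.inl_mem p, (hG.support_scc hp).symm, hj⟩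

theorem eq_compl_of_inr_mem_step [Finite Q] (hG : CliqueWithSource z G) (h2 : 2 ≤ j)
    (hj : j ≤ ({z}ᶜ : Set Q).ncard) {C : Set Q} (hC : Sum.inr C ∈ (step δ G j).verts) :
    C = {z}ᶜ := by
  rcases hC with hC | ⟨D, hD, hDC⟩
  · exact hG.eq_compl_of_inr_mem C hC
  · rw [hG.Qnext_eq h2 hj] at hD
    exact Sum.inr_injective hDC ▸ hD

theorem stronglyConnected_step [Finite Q] (hG : CliqueWithSource z G) (h2 : 2 ≤ j)
    (hj : j ≤ ({z}ᶜ : Set Q).ncard)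
    (hc : ∃ w, defect δ w = j ∧ excl δ w ⊆ {z}ᶜ ∧ z ∈ dupl δ w) :
    StronglyConnected (step δ G j) := by
  have hS : {z}ᶜ ∈ Qnext G j := by
    rw [hG.Qnext_eq h2 hj]
    rfl
  obtain ⟨p, hp⟩ := nonempty_of_ncard_ne_zero (by omega : ({z}ᶜ : Set Q).ncard ≠ 0)
  have into_S (q : Q) (hq : q ≠ z) : (step δ G j).edge (Sum.inl q) (Sum.inr {z}ᶜ) :=
    Or.inr (Or.inl ⟨_, hS, rfl, Or.inl ⟨q, rfl, hq⟩⟩)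
  have out_of_S : (step δ G j).edge (Sum.inr {z}ᶜ) (Sum.inl z) :=
    Or.inr (Or.inr ⟨_, hS, z, rfl, rfl, hc⟩)
  have from_z (q : Q) : GReach (step δ G j) (Sum.inl z) (Sum.inl q) := by
    rcases eq_or_ne q z with rfl | hq
    · exact .refl
    · exact .single (Or.inl (hG.edge z q hq hq))
  refine DGraph.stronglyConnected_of_hub (Sum.inl z) ?_
  rintro (q | C) hv
  · refine ⟨?_, from_z q⟩
    rcases eq_or_ne q z with rfl | hq
    · exact .refl
    · exact .head (into_S q hq) (.single out_of_S)
  · obtain rfl := hG.eq_compl_of_inr_mem_step h2 hj hv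
    exact ⟨.single out_of_S, .tail (from_z p) (into_S p hp)⟩

theorem not_failsAt (hG : CliqueWithSource z (Gamma δ j))
    (hj : j < ({z}ᶜ : Set Q).ncard) : ¬ failsAt δ j := by
  obtain ⟨p, hp⟩ := nonempty_of_ncard_ne_zero (by omega : ({z}ᶜ : Set Q).ncard ≠ 0)
  intro h
  have := h _ (hG.inl_mem p)
  rw [hG.support_scc hp] at this
  omega

theorem step [Finite Q] (hG : CliqueWithSource z G) (h2 : 2 ≤ j)
    (hj : j ≤ ({z}ᶜ : Set Q).ncard) (hδ : ∀ w, defect δ w = j → z ∉ dupl δ w) :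
    CliqueWithSource z (step δ G j) where
  inl_mem q := Or.inl (hG.inl_mem q)
  eq_compl_of_inr_mem _ := hG.eq_compl_of_inr_mem_step h2 hj
  not_edge_source := by
    rintro u (h | ⟨C, -, hC, -⟩ | ⟨C, -, p, -, hp, w, hw, -, hz⟩)
    · exact hG.not_edge_source u h
    · exact Sum.inl_ne_inr hC
    · exact hδ w hw (Sum.inl_injective hp ▸ hz)
  edge q p hp hpq := Or.inl (hG.edge q p hp hpq)

end CliqueWithSource

theorem cliqueWithSource_gamma1 {δ : Q → σ → Q} {z : Q}
    (hδ : ∀ w, defect δ w = 1 → z ∉ dupl δ w)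
    (hmerge : ∀ q p, p ≠ z → p ≠ q → (Gamma1 δ).edge (Sum.inl q) (Sum.inl p)) :
    CliqueWithSource z (Gamma1 δ) where
  inl_mem q := ⟨q, rfl⟩
  eq_compl_of_inr_mem _ h := absurd h (by simp [Gamma1])
  not_edge_source := by
    rintro u ⟨q, p, -, hp, w, hw, -, hz⟩
    exact hδ w hw (Sum.inl_injective hp ▸ hz)
  edge := hmerge

theorem cliqueWithSource_gamma [Finite Q] {δ : Q → σ → Q} {z : Q} {k : ℕ}
    (hδ : ∀ w, defect δ w < k → z ∉ dupl δ w)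
    (hmerge : ∀ q p, p ≠ z → p ≠ q → (Gamma1 δ).edge (Sum.inl q) (Sum.inl p))
    (hk : k ≤ ({z}ᶜ : Set Q).ncard + 1) :
    ∀ j, 1 ≤ j → j < k → CliqueWithSource z (Gamma δ j)
  | 1, _, _ => cliqueWithSource_gamma1 (fun w hw => hδ w (by omega)) hmerge
  | j + 2, _, hj =>
    (cliqueWithSource_gamma hδ hmerge hk (j + 1) (by omega) (by omega)).step (by omega)
      (by omega) (fun w hw => hδ w (by omega))

end LayeredGraphs

section AdmissibleDFA

variable {Q : Type*} {z p : Q} {k : ℕ}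

def IsAdmissible (z : Q) (k : ℕ) (f : Q → Q) : Prop :=
  (∀ q, f q = z → q = z) ∨ k ≤ (range f)ᶜ.ncard

abbrev AdmissibleMap (z : Q) (k : ℕ) : Type _ := {f : Q → Q // IsAdmissible z k f}

def admissibleDFA (z : Q) (k : ℕ) : Q → AdmissibleMap z k → Q := fun q f => f.1 q

theorem IsAdmissible.comp [Finite Q] {f g : Q → Q} (hg : IsAdmissible z k g)
    (hf : IsAdmissible z k f) : IsAdmissible z k (g ∘ f) := by
  rcases hf with hf | hf
  · rcases hg with hg | hg
    · exact Or.inl fun q hq => hf q (hg _ hq)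
    · exact Or.inr (hg.trans (ncard_le_ncard
        (compl_subset_compl.2 (range_comp_subset_range f g))))
  · refine Or.inr (hf.trans ?_)
    have himage : (range (g ∘ f)).ncard ≤ (range f).ncard := by
      rw [range_comp]
      exact ncard_image_le
    have := ncard_add_ncard_compl (range f)
    have := ncard_add_ncard_compl (range (g ∘ f))
    omega

theorem isAdmissible_actWord [Finite Q] (w : List (AdmissibleMap z k)) :
    IsAdmissible z k (actWord (admissibleDFA z k) w) := by
  induction w with
  | nil => exact Or.inl fun _ h => h
  | cons f w ih => exact ih.comp f.2

theorem notMem_dupl_of_defect_lt [Finite Q] {w : List (AdmissibleMap z k)}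
    (hw : defect (admissibleDFA z k) w < k) : z ∉ dupl (admissibleDFA z k) w := by
  rintro ⟨q₁, q₂, hne, h₁, h₂⟩
  rcases isAdmissible_actWord w with h | h
  · exact hne ((h q₁ h₁).trans (h q₂ h₂).symm)
  · rw [defect, excl_eq_compl_range] at hw
    omega

open Classical in
noncomputable def collapseOnto (T : Set Q) (p : Q) : Q → Q := fun x => if x ∈ T then p else x

theorem collapseOnto_of_mem {T : Set Q} {x : Q} (hx : x ∈ T) : collapseOnto T p x = p :=
  if_pos hx

theorem collapseOnto_of_notMem {T : Set Q} {x : Q} (hx : x ∉ T) : collapseOnto T p x = x :=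
  if_neg hx

theorem range_collapseOnto {T : Set Q} (hp : p ∉ T) : range (collapseOnto T p) = Tᶜ := by
  ext x
  constructor
  · rintro ⟨y, rfl⟩
    by_cases hy : y ∈ T
    · rwa [collapseOnto_of_mem hy]
    · rwa [collapseOnto_of_notMem hy]
  · intro hx
    exact ⟨x, collapseOnto_of_notMem hx⟩

theorem isAdmissible_collapseOnto_of_ne {T : Set Q} (hp : p ≠ z) :
    IsAdmissible z k (collapseOnto T p) := by
  refine Or.inl fun x hx => ?_
  by_cases hxT : x ∈ T
  · rw [collapseOnto_of_mem hxT] at hx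
    exact absurd hx hp
  · rwa [collapseOnto_of_notMem hxT] at hx

theorem isAdmissible_collapseOnto_of_le {T : Set Q} (hp : p ∉ T) (hk : k ≤ T.ncard) :
    IsAdmissible z k (collapseOnto T p) :=
  Or.inr (by rwa [range_collapseOnto hp, compl_compl])

theorem excl_collapseOnto {T : Set Q} (h : IsAdmissible z k (collapseOnto T p)) (hp : p ∉ T) :
    excl (admissibleDFA z k) [⟨collapseOnto T p, h⟩] = T :=
  (excl_eq_compl_range _ _).trans
    (show (range (collapseOnto T p))ᶜ = T by rw [range_collapseOnto hp, compl_compl])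

theorem mem_dupl_collapseOnto {T : Set Q} (h : IsAdmissible z k (collapseOnto T p))
    (hp : p ∉ T) {t : Q} (ht : t ∈ T) :
    p ∈ dupl (admissibleDFA z k) [⟨collapseOnto T p, h⟩] :=
  ⟨t, p, ne_of_mem_of_not_mem ht hp, collapseOnto_of_mem ht, collapseOnto_of_notMem hp⟩

theorem gamma1_edge_admissibleDFA {q : Q} (hp : p ≠ z) (hpq : p ≠ q) :
    (Gamma1 (admissibleDFA z k)).edge (Sum.inl q) (Sum.inl p) := by
  have h : IsAdmissible z k (collapseOnto {q} p) := isAdmissible_collapseOnto_of_ne hp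
  refine ⟨q, p, rfl, rfl, [⟨_, h⟩], ?_, excl_collapseOnto h hpq,
    mem_dupl_collapseOnto h hpq rfl⟩
  rw [defect, excl_collapseOnto h hpq, ncard_singleton]

theorem exists_collapseOnto_word [Finite Q] (hk0 : 0 < k) (hk : k ≤ ({z}ᶜ : Set Q).ncard) :
    ∃ w, defect (admissibleDFA z k) w = k ∧ excl (admissibleDFA z k) w ⊆ {z}ᶜ ∧
      z ∈ dupl (admissibleDFA z k) w := by
  obtain ⟨T, hTz, hT⟩ := exists_subset_card_eq hk
  have hzT : z ∉ T := fun hz => hTz hz rfl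
  have h : IsAdmissible z k (collapseOnto T z) := isAdmissible_collapseOnto_of_le hzT hT.ge
  obtain ⟨t, ht⟩ := nonempty_of_ncard_ne_zero (by omega : T.ncard ≠ 0)
  refine ⟨[⟨_, h⟩], ?_, ?_, mem_dupl_collapseOnto h hzT ht⟩
  · rw [defect, excl_collapseOnto h hzT, hT]
  · rwa [excl_collapseOnto h hzT]

theorem completelyReachable_admissibleDFA (hk : k ≤ ({z}ᶜ : Set Q).ncard) :
    completelyReachable (admissibleDFA z k) := by
  intro P hP
  -- `collapseOnto Pᶜ p` with `p ∈ P` has image `P`; it is admissible unless `P = {z}`.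
  suffices ∃ p ∈ P, IsAdmissible z k (collapseOnto Pᶜ p) by
    obtain ⟨p, hp, h⟩ := this
    refine ⟨[⟨_, h⟩], ?_⟩
    rw [actSet_univ]
    exact (range_collapseOnto (not_not_intro hp)).trans (compl_compl P)
  by_cases h : ∃ p ∈ P, p ≠ z
  · obtain ⟨p, hp, hpz⟩ := h
    exact ⟨p, hp, isAdmissible_collapseOnto_of_ne hpz⟩
  · push Not at h
    obtain rfl : P = {z} := eq_singleton_iff_nonempty_unique_mem.2 ⟨hP, h⟩
    exact ⟨z, rfl, isAdmissible_collapseOnto_of_le (not_not_intro rfl) hk⟩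

end AdmissibleDFA

theorem exists_completely_reachable_success_at_k_general
    (n k : ℕ) (hk2 : 2 ≤ k) (hkn : k < n) :
    ∃ (σ : Type) (_ : Fintype σ) (δ : Fin n → σ → Fin n),
      completelyReachable δ ∧ stopsAt δ k ∧
      StronglyConnected (Gamma δ k) ∧
      ∀ j, 1 ≤ j → j < k → ¬ StronglyConnected (Gamma δ j) := by
  obtain ⟨m, rfl⟩ : ∃ m, n = m + 2 := ⟨n - 2, by omega⟩
  have hcard : ({0}ᶜ : Set (Fin (m + 2))).ncard = m + 1 := by
    rw [ncard_compl, ncard_singleton, Nat.card_eq_fintype_card, Fintype.card_fin]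
    rfl
  have hΓ : ∀ j, 1 ≤ j → j < k →
      CliqueWithSource 0 (Gamma (admissibleDFA (0 : Fin (m + 2)) k) j) :=
    cliqueWithSource_gamma (fun _ => notMem_dupl_of_defect_lt)
      (fun _ _ => gamma1_edge_admissibleDFA) (by omega)
  have hsucc : StronglyConnected (Gamma (admissibleDFA (0 : Fin (m + 2)) k) k) := by
    obtain ⟨j, rfl⟩ : ∃ j, k = j + 2 := ⟨k - 2, by omega⟩
    exact (hΓ (j + 1) (by omega) (by omega)).stronglyConnected_step (by omega) (by omega)
      (exists_collapseOnto_word (by omega) (by omega))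
  have hnot : ∀ j, 1 ≤ j → j < k →
      ¬ StronglyConnected (Gamma (admissibleDFA (0 : Fin (m + 2)) k) j) :=
    fun j h1 h2 => (hΓ j h1 h2).not_stronglyConnected one_ne_zero
  refine ⟨AdmissibleMap 0 k, Fintype.ofFinite _, admissibleDFA 0 k,
    completelyReachable_admissibleDFA (by omega), ⟨by omega, Or.inl hsucc, fun j h1 h2 =>
      ⟨hnot j h1 h2, (hΓ j h1 h2).not_failsAt (by omega)⟩⟩, hsucc, hnot⟩

/-- for all `n ≥ 3` and `2 ≤ k < n` there is a completely
reachable DFA `B` with `n` states such that the iterative construction of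
`Γ(B)` terminates with SUCCESS after exactly `k` steps: `Γ(B) = Γ_k(B)` is
strongly connected while `Γ_j(B)` is not strongly connected for all `j < k`.
(The family `E_{n,k}` witnesses this.) -/
theorem exists_completely_reachable_success_at_k
    (n k : ℕ) (hn : 3 ≤ n) (hk2 : 2 ≤ k) (hkn : k < n) :
    ∃ (σ : Type) (_ : Fintype σ) (δ : Fin n → σ → Fin n),
      completelyReachable δ ∧ stopsAt δ k ∧
      StronglyConnected (Gamma δ k) ∧
      ∀ j, 1 ≤ j → j < k → ¬ StronglyConnected (Gamma δ j) :=
  exists_completely_reachable_success_at_k_general n k hk2 hkn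
end
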